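/- arXiv:1012.5550 — 5 statements merged into one kernel-verified Lean document; each statement's English description precedes it below -/
import Mathlib

section
/- Let (M_t)_{t≥0} be a martingale with M_0 = 0 whose one-step increments are bounded by J, and suppose that for |θ| ≤ α the process Z_t(θ) = exp(θ M_t − Σ_{s<t} φ_s(θ)) is a supermartingale, where each φ_s(θ) ≤ (θ²/2) e^{αJ} R/τ whenever the quadratic-variation proxy Φ_{t−1} ≤ R. Then for any δ with δ ≤ e^{αJ} α R, the probability that |M_t| exceeds δ before time τ and before Φ exceeds R is at most 2·exp(−δ²/(2R e^{αJ})). -/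
/-!
For `θ = δ / V` with `V = e^{αJ} R`, the process `Z_t(θ)` starts at `1`, and on the event that
`M_t > δ` at some `t ≤ τ` before `Φ` exceeds `R`, the compensator `∑_{s<t} φ_s(θ)` is at most
`θ² V / 2`, so `Z_t(θ) ≥ exp(θ δ - θ² V / 2) = exp(δ² / (2V))`. Ville's maximal inequality for
the nonnegative supermartingale `Z(θ)`, obtained by optional stopping at the first time it
reaches that level, bounds the probability of this event by `exp(-δ² / (2V))`. The same argument
with `-θ` handles `M_t < -δ`; the condition `δ ≤ α V` is exactly `|θ| ≤ α`.
-/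

open MeasureTheory Finset
open scoped ProbabilityTheory

namespace MeasureTheory

variable {Ω : Type*} {m0 : MeasurableSpace Ω} {μ : Measure Ω} {ℱ : Filtration ℕ m0}

theorem Supermartingale.expected_stoppedValue_anti [SigmaFiniteFiltration μ ℱ]
    {f : ℕ → Ω → ℝ} (hf : Supermartingale f ℱ μ) {σ π : Ω → ℕ∞}
    (hσ : IsStoppingTime ℱ σ) (hπ : IsStoppingTime ℱ π) (hle : σ ≤ π) {N : ℕ}
    (hbdd : ∀ ω, π ω ≤ N) : μ[stoppedValue f π] ≤ μ[stoppedValue f σ] := by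
  have h := hf.neg.expected_stoppedValue_mono hσ hπ hle hbdd
  simpa only [stoppedValue, Pi.neg_apply, integral_neg, neg_le_neg_iff] using h

/-- Ville's maximal inequality over a finite horizon. -/
theorem Supermartingale.measure_exists_le_le [IsFiniteMeasure μ] {Z : ℕ → Ω → ℝ}
    (hZ : Supermartingale Z ℱ μ) (hnonneg : ∀ t ω, 0 ≤ Z t ω) {c : ℝ} (hc : 0 < c) (n : ℕ) :
    μ {ω | ∃ k ≤ n, c ≤ Z k ω} ≤ ENNReal.ofReal (μ[Z 0] / c) := by
  set T : Ω → ℕ∞ := fun ω => (hittingBtwn Z (Set.Ici c) 0 n ω : ℕ)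
  have hT : IsStoppingTime ℱ T :=
    hZ.stronglyAdapted.adapted.isStoppingTime_hittingBtwn measurableSet_Ici
  have hTle : ∀ ω, T ω ≤ n := fun ω => WithTop.coe_le_coe.mpr (hittingBtwn_le ω)
  have hsub : {ω | ∃ k ≤ n, c ≤ Z k ω} ⊆ {ω | c ≤ stoppedValue Z T ω} :=
    fun ω ⟨k, hk, hck⟩ => stoppedValue_hittingBtwn_mem ⟨k, ⟨k.zero_le, hk⟩, hck⟩
  have hmarkov : c * μ.real {ω | c ≤ stoppedValue Z T ω} ≤ μ[stoppedValue Z T] :=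
    mul_meas_ge_le_integral_of_nonneg (.of_forall fun ω => hnonneg _ _)
      (integrable_stoppedValue ℕ hT hZ.integrable hTle) c
  have hstop : μ[stoppedValue Z T] ≤ μ[Z 0] :=
    hZ.expected_stoppedValue_anti (isStoppingTime_const ℱ 0) hT (fun _ => zero_le) hTle
  calc μ {ω | ∃ k ≤ n, c ≤ Z k ω} ≤ μ {ω | c ≤ stoppedValue Z T ω} := measure_mono hsub
    _ = ENNReal.ofReal (μ.real {ω | c ≤ stoppedValue Z T ω}) :=
      (ofReal_measureReal (measure_ne_top _ _)).symm
    _ ≤ ENNReal.ofReal (μ[Z 0] / c) := by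
      gcongr
      rw [le_div_iff₀ hc]
      linarith

end MeasureTheory

theorem sum_range_le_of_le_div {f : ℕ → ℝ} {b : ℝ} {t τ : ℕ} (hb : 0 ≤ b) (hτ : 0 < τ)
    (ht : t ≤ τ) (hf : ∀ s < t, f s ≤ b / τ) : ∑ s ∈ range t, f s ≤ b := by
  calc ∑ s ∈ range t, f s ≤ ∑ _s ∈ range t, b / τ :=
        sum_le_sum fun s hs => hf s (mem_range.mp hs)
    _ = t * (b / τ) := by rw [sum_const, card_range, nsmul_eq_mul]
    _ ≤ τ * (b / τ) := by gcongr
    _ = b := by field_simp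

theorem measure_exists_lt_le_exp {Ω : Type*} {m0 : MeasurableSpace Ω} {μ : Measure Ω}
    [IsProbabilityMeasure μ] {ℱ : Filtration ℕ m0} {N Φ ψ : ℕ → Ω → ℝ} {R V δ : ℝ} {τ : ℕ}
    (hV : 0 < V) (hδ : 0 < δ) (hτ : 0 < τ) (hN0 : ∀ ω, N 0 ω = 0)
    (hsup : Supermartingale
      (fun t ω => Real.exp (δ / V * N t ω - ∑ s ∈ range t, ψ s ω)) ℱ μ)
    (hψ : ∀ s ω, Φ s ω ≤ R → ψ s ω ≤ (δ / V) ^ 2 / 2 * V / τ) :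
    μ {ω | ∃ t ≤ τ, (∀ s < t, Φ s ω ≤ R) ∧ δ < N t ω}
      ≤ ENNReal.ofReal (Real.exp (-δ ^ 2 / (2 * V))) := by
  set θ := δ / V
  have hθ : 0 < θ := div_pos hδ hV
  have hexponent : θ * δ - θ ^ 2 / 2 * V = δ ^ 2 / (2 * V) := by
    simp only [θ]; field_simp; ring
  have hsub : {ω | ∃ t ≤ τ, (∀ s < t, Φ s ω ≤ R) ∧ δ < N t ω} ⊆
      {ω | ∃ t ≤ τ, Real.exp (δ ^ 2 / (2 * V)) ≤
        Real.exp (θ * N t ω - ∑ s ∈ range t, ψ s ω)} := by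
    rintro ω ⟨t, ht, hΦ, hN⟩
    have hcomp : ∑ s ∈ range t, ψ s ω ≤ θ ^ 2 / 2 * V :=
      sum_range_le_of_le_div (by positivity) hτ ht fun s hs => hψ s ω (hΦ s hs)
    have hdrift : θ * δ ≤ θ * N t ω := by gcongr
    exact ⟨t, ht, Real.exp_le_exp.mpr (by linarith)⟩
  have hZ0 : μ[fun ω => Real.exp (θ * N 0 ω - ∑ s ∈ range 0, ψ s ω)] = 1 := by
    simp [hN0]
  calc _ ≤ _ := measure_mono hsub
    _ ≤ _ := hsup.measure_exists_le_le (fun _ _ => (Real.exp_pos _).le) (Real.exp_pos _) τ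
    _ = ENNReal.ofReal (Real.exp (-δ ^ 2 / (2 * V))) := by
      rw [hZ0, one_div, ← Real.exp_neg, neg_div]

theorem stmt3_general {Ω : Type*} {m0 : MeasurableSpace Ω} {μ : Measure Ω} [IsProbabilityMeasure μ]
    (ℱ : Filtration ℕ m0) (M : ℕ → Ω → ℝ) (Φ : ℕ → Ω → ℝ) (φ : ℕ → ℝ → Ω → ℝ)
    (J R α δ : ℝ) (τ : ℕ)
    (hR : 0 < R) (hδ : 0 < δ) (hτ : 0 < τ)
    (hM0 : ∀ ω, M 0 ω = 0)
    (hsup : ∀ θ : ℝ, |θ| ≤ α →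
      Supermartingale
        (fun t ω => Real.exp (θ * M t ω - ∑ s ∈ Finset.range t, φ s θ ω)) ℱ μ)
    (hφ : ∀ θ : ℝ, |θ| ≤ α → ∀ s ω, Φ s ω ≤ R →
      φ s θ ω ≤ θ ^ 2 / 2 * Real.exp (α * J) * R / τ)
    (hδα : δ ≤ Real.exp (α * J) * α * R) :
    μ {ω | ∃ t, t ≤ τ ∧ (∀ s < t, Φ s ω ≤ R) ∧ δ < |M t ω|}
      ≤ ENNReal.ofReal (2 * Real.exp (-δ ^ 2 / (2 * R * Real.exp (α * J)))) := by
  set V := Real.exp (α * J) * R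
  have hV : 0 < V := by positivity
  have hθ : |δ / V| ≤ α := by
    rw [abs_of_pos (div_pos hδ hV), div_le_iff₀ hV]
    linarith
  have hθ' : |-(δ / V)| ≤ α := by rwa [abs_neg]
  have hφV : ∀ θ, |θ| ≤ α → ∀ s ω, Φ s ω ≤ R → φ s θ ω ≤ θ ^ 2 / 2 * V / τ := fun θ hθ s ω h =>
    (hφ θ hθ s ω h).trans_eq (by ring)
  have hupper := measure_exists_lt_le_exp hV hδ hτ hM0 (hsup _ hθ) (hφV _ hθ)
  have hlower := measure_exists_lt_le_exp (N := -M) hV hδ hτ (by simpa using hM0)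
    (by simpa only [Pi.neg_apply, mul_neg, neg_mul] using hsup _ hθ')
    (by simpa only [neg_sq] using hφV _ hθ')
  have hsplit : {ω | ∃ t, t ≤ τ ∧ (∀ s < t, Φ s ω ≤ R) ∧ δ < |M t ω|} ⊆
      {ω | ∃ t ≤ τ, (∀ s < t, Φ s ω ≤ R) ∧ δ < M t ω} ∪
        {ω | ∃ t ≤ τ, (∀ s < t, Φ s ω ≤ R) ∧ δ < (-M) t ω} := by
    rintro ω ⟨t, ht, hΦ, hMt⟩
    rcases lt_abs.mp hMt with h | h
    exacts [.inl ⟨t, ht, hΦ, h⟩, .inr ⟨t, ht, hΦ, h⟩]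
  calc _ ≤ _ := measure_mono hsplit
    _ ≤ _ := measure_union_le _ _
    _ ≤ _ := add_le_add hupper hlower
    _ = _ := by
      rw [← ENNReal.ofReal_add (by positivity) (by positivity), ← two_mul,
        mul_right_comm 2 R, mul_assoc]

/-- The key deviation bound: if `M` is a martingale with `M 0 = 0`, increments bounded by `J`,
and for each `|θ| ≤ α` the process `Z_t(θ) = exp(θ M_t − ∑_{s<t} φ_s(θ))` is a supermartingale,
where `φ_s(θ) ≤ (θ²/2) e^{αJ} R/τ` whenever the quadratic-variation proxy `Φ_s ≤ R`, then
for `δ ≤ e^{αJ} α R`, the probability that `|M_t|` exceeds `δ` at some time `t ≤ τ` before `Φ`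
exceeds `R` is at most `2 exp(−δ²/(2 R e^{αJ}))`. -/
theorem stmt3 {Ω : Type*} {m0 : MeasurableSpace Ω} {μ : Measure Ω} [IsProbabilityMeasure μ]
    (ℱ : Filtration ℕ m0) (M : ℕ → Ω → ℝ) (Φ : ℕ → Ω → ℝ) (φ : ℕ → ℝ → Ω → ℝ)
    (J R α δ : ℝ) (τ : ℕ)
    (hJ : 0 < J) (hR : 0 < R) (hα : 0 < α) (hδ : 0 < δ) (hτ : 0 < τ)
    (hM : Martingale M ℱ μ)
    (hM0 : ∀ ω, M 0 ω = 0)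
    (hincr : ∀ t ω, |M (t + 1) ω - M t ω| ≤ J)
    (hsup : ∀ θ : ℝ, |θ| ≤ α →
      Supermartingale
        (fun t ω => Real.exp (θ * M t ω - ∑ s ∈ Finset.range t, φ s θ ω)) ℱ μ)
    (hφ : ∀ θ : ℝ, |θ| ≤ α → ∀ s ω, Φ s ω ≤ R →
      φ s θ ω ≤ θ ^ 2 / 2 * Real.exp (α * J) * R / τ)
    (hδα : δ ≤ Real.exp (α * J) * α * R) :
    μ {ω | ∃ t, t ≤ τ ∧ (∀ s < t, Φ s ω ≤ R) ∧ δ < |M t ω|}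
      ≤ ENNReal.ofReal (2 * Real.exp (-δ ^ 2 / (2 * R * Real.exp (α * J)))) :=
  stmt3_general ℱ M Φ φ J R α δ τ hR hδ hτ hM0 hsup hφ hδα
end

section
/- Let τ_0 ≥ 4 be an integer and m_0 > 0. Define x_t for t ≥ τ_0 by x_{τ_0} = m_0 and x_{t+1} = x_t(1 + 1/(2(t−1))). Then for all t ≥ τ_0: m_0·√((t−1)/(τ_0−1)) ≤ x_t ≤ m_0·√((t−2)/(τ_0−2)), and moreover x_t ≤ (5/4)·m_0·√((t−1)/(τ_0−1)). -/
/-- Bounds for the deterministic recursion `x_{t+1} = x_t (1 + 1/(2(t−1)))`, `x_{τ₀} = m₀`: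
for all `t ≥ τ₀ ≥ 4`, `m₀ √((t−1)/(τ₀−1)) ≤ x_t ≤ m₀ √((t−2)/(τ₀−2))`, and moreover
`x_t ≤ (5/4) m₀ √((t−1)/(τ₀−1))`. -/
theorem stmt4 (τ₀ : ℕ) (hτ₀ : 4 ≤ τ₀) (m₀ : ℝ) (hm₀ : 0 < m₀)
    (x : ℕ → ℝ) (hinit : x τ₀ = m₀)
    (hrec : ∀ t, τ₀ ≤ t → x (t + 1) = x t * (1 + 1 / (2 * ((t : ℝ) - 1)))) :
    ∀ t, τ₀ ≤ t →
      m₀ * Real.sqrt (((t : ℝ) - 1) / ((τ₀ : ℝ) - 1)) ≤ x t ∧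
      x t ≤ m₀ * Real.sqrt (((t : ℝ) - 2) / ((τ₀ : ℝ) - 2)) ∧
      x t ≤ 5 / 4 * m₀ * Real.sqrt (((t : ℝ) - 1) / ((τ₀ : ℝ) - 1)) := by
  have hτR : (4:ℝ) ≤ (τ₀:ℝ) := by exact_mod_cast hτ₀
  have hτ1 : (0:ℝ) < (τ₀:ℝ) - 1 := by linarith
  have hτ2 : (0:ℝ) < (τ₀:ℝ) - 2 := by linarith
  have main : ∀ t, τ₀ ≤ t →
      m₀ * Real.sqrt (((t : ℝ) - 1) / ((τ₀ : ℝ) - 1)) ≤ x t ∧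
      x t ≤ m₀ * Real.sqrt (((t : ℝ) - 2) / ((τ₀ : ℝ) - 2)) := by
    intro t ht
    induction t, ht using Nat.le_induction with
    | base =>
      rw [hinit, div_self hτ1.ne', div_self hτ2.ne', Real.sqrt_one, mul_one]
      exact ⟨le_refl _, le_refl _⟩
    | succ t ht ih =>
      have htR : (4:ℝ) ≤ (t:ℝ) := le_trans hτR (by exact_mod_cast ht)
      have h1 : (0:ℝ) < (t:ℝ) - 1 := by linarith
      have h2 : (0:ℝ) < (t:ℝ) - 2 := by linarith
      set c : ℝ := 1 + 1 / (2 * ((t:ℝ) - 1)) with hc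
      have hcpos : 0 < c := by rw [hc]; positivity
      have hrec' : x (t+1) = x t * c := hrec t ht
      have sqmul : ∀ a : ℝ, 0 ≤ a → Real.sqrt (a * c ^ 2) = Real.sqrt a * c := by
        intro a ha
        rw [Real.sqrt_mul ha, Real.sqrt_sq hcpos.le]
      have castsub1 : ((t+1 : ℕ) : ℝ) - 1 = (t:ℝ) := by push_cast; ring
      have castsub2 : ((t+1 : ℕ) : ℝ) - 2 = (t:ℝ) - 1 := by push_cast; ring
      constructor
      · rw [castsub1]
        have key : (t:ℝ) ≤ ((t:ℝ) - 1) * c ^ 2 := by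
          rw [hc]
          have e : ((t:ℝ)-1) * (1 + 1/(2*((t:ℝ)-1)))^2 = (t:ℝ) + 1/(4*((t:ℝ)-1)) := by
            field_simp; ring
          rw [e]
          have : 0 < 1/(4*((t:ℝ)-1)) := by positivity
          linarith
        have h3 : (t:ℝ) / ((τ₀:ℝ)-1) ≤ (((t:ℝ)-1) / ((τ₀:ℝ)-1)) * c ^ 2 := by
          rw [div_mul_eq_mul_div, div_le_div_iff₀ hτ1 hτ1]
          nlinarith [key, hτ1]
        calc m₀ * Real.sqrt ((t:ℝ)/((τ₀:ℝ)-1))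
            ≤ m₀ * (Real.sqrt (((t:ℝ)-1)/((τ₀:ℝ)-1)) * c) := by
              rw [← sqmul _ (by positivity)]
              exact mul_le_mul_of_nonneg_left (Real.sqrt_le_sqrt h3) hm₀.le
          _ = m₀ * Real.sqrt (((t:ℝ)-1)/((τ₀:ℝ)-1)) * c := by ring
          _ ≤ x t * c := mul_le_mul_of_nonneg_right ih.1 hcpos.le
          _ = x (t+1) := hrec'.symm
      · rw [castsub2]
        have key : ((t:ℝ) - 2) * c ^ 2 ≤ (t:ℝ) - 1 := by
          rw [hc]
          have e : ((t:ℝ)-2) * (1 + 1/(2*((t:ℝ)-1)))^2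
              = (((t:ℝ)-2) * (2*((t:ℝ)-1)+1)^2) / (2*((t:ℝ)-1))^2 := by
            field_simp
          rw [e, div_le_iff₀ (by positivity)]
          nlinarith [h1, h2]
        have h3 : (((t:ℝ)-2) / ((τ₀:ℝ)-2)) * c ^ 2 ≤ ((t:ℝ)-1) / ((τ₀:ℝ)-2) := by
          rw [div_mul_eq_mul_div, div_le_div_iff₀ hτ2 hτ2]
          nlinarith [key, hτ2]
        calc x (t+1) = x t * c := hrec'
          _ ≤ m₀ * Real.sqrt (((t:ℝ)-2)/((τ₀:ℝ)-2)) * c :=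
              mul_le_mul_of_nonneg_right ih.2 hcpos.le
          _ = m₀ * (Real.sqrt (((t:ℝ)-2)/((τ₀:ℝ)-2)) * c) := by ring
          _ ≤ m₀ * Real.sqrt (((t:ℝ)-1)/((τ₀:ℝ)-2)) := by
              rw [← sqmul _ (by positivity)]
              exact mul_le_mul_of_nonneg_left (Real.sqrt_le_sqrt h3) hm₀.le
  intro t ht
  obtain ⟨hl, hu⟩ := main t ht
  refine ⟨hl, hu, hu.trans ?_⟩
  have htR : (4:ℝ) ≤ (t:ℝ) := le_trans hτR (by exact_mod_cast ht)
  have htτ : (τ₀:ℝ) ≤ (t:ℝ) := by exact_mod_cast ht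
  have hdiv : ((t:ℝ)-2)/((τ₀:ℝ)-2) ≤ (5/4)^2 * (((t:ℝ)-1)/((τ₀:ℝ)-1)) := by
    rw [mul_div_assoc' , div_le_div_iff₀ hτ2 hτ1]
    nlinarith [mul_nonneg (by linarith : (0:ℝ) ≤ (t:ℝ)) (by linarith : (0:ℝ) ≤ (τ₀:ℝ)-4)]
  have hs : Real.sqrt (((t:ℝ)-2)/((τ₀:ℝ)-2))
      ≤ 5/4 * Real.sqrt (((t:ℝ)-1)/((τ₀:ℝ)-1)) := by
    have := Real.sqrt_le_sqrt hdiv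
    rwa [Real.sqrt_mul (by norm_num : (0:ℝ) ≤ (5/4)^2),
      Real.sqrt_sq (by norm_num : (0:ℝ) ≤ (5/4:ℝ))] at this
  calc m₀ * Real.sqrt (((t:ℝ)-2)/((τ₀:ℝ)-2))
      ≤ m₀ * (5/4 * Real.sqrt (((t:ℝ)-1)/((τ₀:ℝ)-1))) :=
        mul_le_mul_of_nonneg_left hs hm₀.le
    _ = 5/4 * m₀ * Real.sqrt (((t:ℝ)-1)/((τ₀:ℝ)-1)) := by ring
end

section
/- For integers ℓ > j ≥ 1 and integer α ≥ −1, the integral I(ℓ,j,α) = ∫_0^1 (1−v)^{2j−2} v^{2ℓ−2j+α} (ℓ(1−v) − j)² dv satisfies I(ℓ,j,α) ≤ [(2ℓ−2j+α)! (2j−2)! / (2ℓ+α+1)!] · jℓ · (2(ℓ−j+1) + α(3+α)). Moreover I(ℓ,0,α) = ℓ²/(2ℓ+α+1) ≤ ℓ/2. -/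
/-!
Expanding `(ℓ(1 - v) - j)²` in powers of `1 - v` writes `I(ℓ, j, α)` as a combination of three
Beta integrals `∫₀¹ (1 - v)^a v^b dv = a! b! / (a + b + 1)!` with the same `b` and `a`, `a + 1`,
`a + 2`. After extracting `a! b! / (a + b + 3)!` what remains is a quadratic polynomial in `j`, `ℓ`,
`α`, which falls short of the claimed bound by exactly `j (ℓ - j) α (α + 1) ≥ 0`.
For `j = 0` the factor `(1 - v)^{-2}` cancels against `(ℓ(1 - v))²`, leaving `ℓ² ∫₀¹ v^{2ℓ+α} dv`.
-/

open Nat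

theorem integral_one_sub_pow_mul_pow (a b : ℕ) :
    ∫ v in (0:ℝ)..1, (1 - v) ^ a * v ^ b = (a ! * b ! / (a + b + 1)! : ℝ) := by
  have hB : Complex.betaIntegral (b + 1) (a + 1)
      = ((∫ v in (0:ℝ)..1, (1 - v) ^ a * v ^ b : ℝ) : ℂ) := by
    simp only [Complex.betaIntegral, add_sub_cancel_right, Complex.cpow_natCast,
      ← intervalIntegral.integral_ofReal]
    push_cast
    simp_rw [mul_comm]
  have h := Complex.Gamma_mul_Gamma_eq_betaIntegral (s := b + 1) (t := a + 1)
    (by simp; positivity) (by simp; positivity)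
  rw [hB, show (b : ℂ) + 1 + (a + 1) = ((a + b + 1 : ℕ) : ℂ) + 1 by push_cast; ring,
    Complex.Gamma_nat_eq_factorial, Complex.Gamma_nat_eq_factorial,
    Complex.Gamma_nat_eq_factorial] at h
  rw [eq_div_iff (by positivity)]
  exact_mod_cast (h.trans (mul_comm _ _)).symm.trans (mul_comm _ _)

theorem integral_one_sub_pow_mul_pow_mul_sq (a b : ℕ) (x y : ℝ) :
    ∫ v in (0:ℝ)..1, (1 - v) ^ a * v ^ b * (x * (1 - v) - y) ^ 2
      = a ! * b ! / (a + b + 3)! * (x ^ 2 * (a + 1) * (a + 2)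
          - 2 * x * y * (a + 1) * (a + b + 3) + y ^ 2 * (a + b + 2) * (a + b + 3)) := by
  have hint : ∀ m, IntervalIntegrable (fun v : ℝ => (1 - v) ^ m * v ^ b) MeasureTheory.volume 0 1 :=
    fun m => (by fun_prop : Continuous _).intervalIntegrable _ _
  have hexpand : (fun v : ℝ => (1 - v) ^ a * v ^ b * (x * (1 - v) - y) ^ 2)
      = fun v => x ^ 2 * ((1 - v) ^ (a + 2) * v ^ b)
          - 2 * x * y * ((1 - v) ^ (a + 1) * v ^ b) + y ^ 2 * ((1 - v) ^ a * v ^ b) := by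
    ext v; ring
  rw [hexpand, intervalIntegral.integral_add (((hint _).const_mul _).sub ((hint _).const_mul _))
      ((hint _).const_mul _), intervalIntegral.integral_sub ((hint _).const_mul _)
      ((hint _).const_mul _), intervalIntegral.integral_const_mul,
    intervalIntegral.integral_const_mul, intervalIntegral.integral_const_mul,
    integral_one_sub_pow_mul_pow, integral_one_sub_pow_mul_pow, integral_one_sub_pow_mul_pow,
    show a + 2 + b + 1 = a + b + 1 + 1 + 1 by ring, show a + 1 + b + 1 = a + b + 1 + 1 by ring,
    show a + b + 3 = a + b + 1 + 1 + 1 by ring]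
  simp only [Nat.factorial_succ]
  push_cast
  field_simp
  ring

theorem integral_one_sub_zpow_neg_two_mul_pow_mul_sq (n : ℕ) (x : ℝ) :
    ∫ v in (0:ℝ)..1, (1 - v) ^ (-2 : ℤ) * v ^ (n : ℤ) * (x * (1 - v)) ^ 2
      = x ^ 2 / (n + 1) := by
  have hae : ∀ᵐ v : ℝ, v ∈ Set.uIoc 0 1 →
      (1 - v) ^ (-2 : ℤ) * v ^ (n : ℤ) * (x * (1 - v)) ^ 2 = x ^ 2 * v ^ n := by
    filter_upwards [MeasureTheory.measure_singleton (μ := MeasureTheory.volume) (1 : ℝ)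
      |> MeasureTheory.compl_mem_ae_iff.mpr] with v hv _
    have : 1 - v ≠ 0 := sub_ne_zero.mpr (Ne.symm hv)
    simp only [zpow_neg, zpow_natCast]
    field_simp
  rw [intervalIntegral.integral_congr_ae hae, intervalIntegral.integral_const_mul, integral_pow]
  simp
  ring

theorem Int.mul_add_one_nonneg (α : ℤ) : 0 ≤ α * (α + 1) := by
  rcases le_or_gt 0 α with h | h <;> nlinarith

theorem beta_bracket_le (j ℓ : ℝ) (α : ℤ) (hj : 0 ≤ j) (hjℓ : j ≤ ℓ) :
    ℓ ^ 2 * (2 * j - 1) * (2 * j) - 2 * ℓ * j * (2 * j - 1) * (2 * ℓ + α + 1)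
        + j ^ 2 * (2 * ℓ + α) * (2 * ℓ + α + 1)
      ≤ j * ℓ * (2 * (ℓ - j + 1) + α * (3 + α)) := by
  have hα : (0 : ℝ) ≤ α * (α + 1) := by exact_mod_cast Int.mul_add_one_nonneg α
  nlinarith [mul_nonneg (mul_nonneg hj (sub_nonneg.mpr hjℓ)) hα]

/-- Bound for the Beta-type integral
`I(ℓ,j,α) = ∫_0^1 (1−v)^{2j−2} v^{2ℓ−2j+α} (ℓ(1−v) − j)² dv`:
for `ℓ > j ≥ 1` and `α ≥ −1`,
`I(ℓ,j,α) ≤ [(2ℓ−2j+α)!(2j−2)!/(2ℓ+α+1)!] jℓ (2(ℓ−j+1) + α(3+α))`;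
moreover `I(ℓ,0,α) = ℓ²/(2ℓ+α+1) ≤ ℓ/2`. -/
theorem stmt9 (ℓ j : ℕ) (α : ℤ) (hj : 1 ≤ j) (hjℓ : j < ℓ) (hα : -1 ≤ α) :
    ((∫ v in (0:ℝ)..1, (1 - v) ^ (2 * (j : ℤ) - 2) * v ^ (2 * (ℓ : ℤ) - 2 * j + α)
        * ((ℓ : ℝ) * (1 - v) - (j : ℝ)) ^ 2)
      ≤ ((2 * (ℓ : ℤ) - 2 * j + α).toNat.factorial : ℝ) * ((2 * j - 2).factorial : ℝ)
          / ((2 * (ℓ : ℤ) + α + 1).toNat.factorial : ℝ)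
          * ((j : ℝ) * (ℓ : ℝ))
          * (2 * ((ℓ : ℝ) - (j : ℝ) + 1) + (α : ℝ) * (3 + (α : ℝ)))) ∧
    ((∫ v in (0:ℝ)..1, (1 - v) ^ (2 * (0 : ℤ) - 2) * v ^ (2 * (ℓ : ℤ) - 2 * 0 + α)
        * ((ℓ : ℝ) * (1 - v) - (0 : ℝ)) ^ 2)
      = (ℓ : ℝ) ^ 2 / (2 * (ℓ : ℝ) + (α : ℝ) + 1)) ∧
    ((ℓ : ℝ) ^ 2 / (2 * (ℓ : ℝ) + (α : ℝ) + 1) ≤ (ℓ : ℝ) / 2) := by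
  obtain ⟨a, ha, ha'⟩ : ∃ a : ℕ, 2 * (j : ℤ) - 2 = a ∧ 2 * j - 2 = a := ⟨2 * j - 2, by omega, rfl⟩
  obtain ⟨b, hb⟩ : ∃ b : ℕ, 2 * (ℓ : ℤ) - 2 * j + α = b := ⟨_, (Int.toNat_of_nonneg (by omega)).symm⟩
  have hab : (2 * (ℓ : ℤ) + α + 1).toNat = a + b + 3 := by omega
  have hℓα : (0 : ℝ) < 2 * ℓ + α + 1 := by
    have : (0 : ℤ) < 2 * ℓ + α + 1 := by omega
    exact_mod_cast this
  refine ⟨?_, ?_, ?_⟩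
  · have haR : (a : ℝ) = 2 * j - 2 := by exact_mod_cast ha.symm
    have hbR : (b : ℝ) = 2 * ℓ - 2 * j + α := by exact_mod_cast hb.symm
    simp only [ha, hb, ha', hab, Int.toNat_natCast, zpow_natCast]
    rw [integral_one_sub_pow_mul_pow_mul_sq, mul_comm (b ! : ℝ)]
    refine (mul_le_mul_of_nonneg_left ?_ (by positivity)).trans_eq (mul_assoc _ _ _).symm
    rw [haR, hbR]
    linarith [beta_bracket_le (j : ℝ) ℓ α (by positivity) (by exact_mod_cast hjℓ.le)]
  · obtain ⟨n, hn⟩ : ∃ n : ℕ, 2 * (ℓ : ℤ) - 2 * 0 + α = n :=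
      ⟨_, (Int.toNat_of_nonneg (by omega)).symm⟩
    have hnR : (n : ℝ) = 2 * ℓ + α := by exact_mod_cast (by omega : (n : ℤ) = 2 * ℓ + α)
    simp only [hn, show 2 * (0 : ℤ) - 2 = -2 by rfl, sub_zero]
    rw [integral_one_sub_zpow_neg_two_mul_pow_mul_sq, hnR]
  · rw [div_le_div_iff₀ hℓα two_pos]
    have : (0 : ℝ) ≤ α + 1 := by exact_mod_cast (by omega : (0 : ℤ) ≤ α + 1)
    nlinarith [mul_nonneg (Nat.cast_nonneg ℓ : (0 : ℝ) ≤ ℓ) this]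
end

section
/- Fix integers ℓ ≥ 2, τ ≥ 2, 1 ≤ j ≤ ℓ−1, and define h_j(v) = (1/(ℓ−j))·C(ℓ−1,j)·(1−v)^{j−1} v^{ℓ−j−1}(ℓ(1−v) − j) for v ∈ [0,1]. Then |h_j(v)| ≤ √((ℓ−1)/(j(ℓ−j))) for all v ∈ [0,1]. -/
/-!
With `x = 1 - v`, `ℓ = k + m + 2` and `j = k + 1`, the function is `c · P(x) · D(x)` where
`c = (ℓ-1)/(j(ℓ-j))`, `P = b_{ℓ-2,j-1}` is a Bernstein basis polynomial (a Binomial(ℓ-2, x) point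
probability) and `D(x) = ℓx - j`. Then `P ≤ 1`, and the Bernstein variance identity
`∑ ν, (ℓx - ν)² b_{ℓ,ν}(x) = ℓx(1-x)`, together with `b_{ℓ,j} = (ℓ(ℓ-1)/(j(ℓ-j))) x(1-x) P`, gives
`P D² ≤ 1/c`. Hence `(c P D)² = c² P (P D²) ≤ c`.
-/

open Set Polynomial

theorem Nat.add_one_mul_add_one_mul_choose_add_two (k m : ℕ) :
    (k + 1) * (m + 1) * (k + m + 2).choose (k + 1)
      = (k + m + 2) * (k + m + 1) * (k + m).choose k := by
  have h₁ := Nat.add_one_mul_choose_eq (k + m) k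
  have h₂ := Nat.choose_mul_succ_eq (k + m + 1) (k + 1)
  rw [show k + m + 1 + 1 - (k + 1) = m + 1 by omega] at h₂
  calc (k + 1) * (m + 1) * (k + m + 2).choose (k + 1)
      = (k + 1) * ((k + m + 1).choose (k + 1) * (k + m + 2)) := by rw [h₂]; ring
    _ = (k + m + 2) * ((k + m + 1) * (k + m).choose k) := by rw [h₁]; ring
    _ = _ := by ring

namespace bernsteinPolynomial

theorem add_one_mul_add_one_mul_add_two {R : Type*} [CommRing R] (k m : ℕ) :
    ((k : R[X]) + 1) * (m + 1) * bernsteinPolynomial R (k + m + 2) (k + 1)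
      = ((k : R[X]) + m + 2) * (k + m + 1) * (X * (1 - X) : R[X])
        * bernsteinPolynomial R (k + m) k := by
  have h : ((k : R[X]) + 1) * (m + 1) * (k + m + 2).choose (k + 1)
      = (k + m + 2) * (k + m + 1) * (k + m).choose k := by
    exact_mod_cast
      congrArg (Nat.cast (R := R[X])) (Nat.add_one_mul_add_one_mul_choose_add_two k m)
  rw [bernsteinPolynomial, bernsteinPolynomial, show k + m + 2 - (k + 1) = m + 1 by omega,
    Nat.add_sub_cancel_left]
  linear_combination (X ^ (k + 1) * (1 - X) ^ (m + 1)) * h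

variable {n ν : ℕ} {x : ℝ}

theorem eval_nonneg (hx : x ∈ Icc 0 1) : 0 ≤ (bernsteinPolynomial ℝ n ν).eval x := by
  have : 0 ≤ 1 - x := by linarith [hx.2]
  simp only [bernsteinPolynomial, eval_mul, eval_pow, eval_sub, eval_natCast, eval_one, eval_X]
  exact mul_nonneg (mul_nonneg (Nat.cast_nonneg _) (pow_nonneg hx.1 _)) (pow_nonneg this _)

theorem eval_le_one (hx : x ∈ Icc 0 1) : (bernsteinPolynomial ℝ n ν).eval x ≤ 1 := by
  rcases lt_or_ge n ν with hnν | hνn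
  · simp [eq_zero_of_lt ℝ hnν]
  calc _ ≤ ∑ μ ∈ Finset.range (n + 1), (bernsteinPolynomial ℝ n μ).eval x :=
        Finset.single_le_sum (fun μ _ => eval_nonneg hx) (Finset.mem_range.2 (by omega))
    _ = 1 := by rw [← eval_finsetSum, bernsteinPolynomial.sum, eval_one]

theorem sq_sub_mul_eval_le (hx : x ∈ Icc 0 1) :
    (n * x - ν) ^ 2 * (bernsteinPolynomial ℝ n ν).eval x ≤ n * x * (1 - x) := by
  rcases lt_or_ge n ν with hnν | hνn
  · rw [eq_zero_of_lt ℝ hnν, eval_zero, mul_zero]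
    exact mul_nonneg (mul_nonneg n.cast_nonneg hx.1) (sub_nonneg.2 hx.2)
  calc _ ≤ ∑ μ ∈ Finset.range (n + 1), (n * x - μ) ^ 2 * (bernsteinPolynomial ℝ n μ).eval x :=
        Finset.single_le_sum (fun μ _ => mul_nonneg (sq_nonneg _) (eval_nonneg hx))
          (Finset.mem_range.2 (by omega))
    _ = n * x * (1 - x) := by
        simpa [eval_finsetSum] using congrArg (eval x) (bernsteinPolynomial.variance ℝ n)

theorem eval_mul_sq_le (k m : ℕ) (hx : x ∈ Icc 0 1) :
    (bernsteinPolynomial ℝ (k + m) k).eval x * ((k + m + 2) * x - (k + 1)) ^ 2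
      ≤ (k + 1) * (m + 1) / (k + m + 1) := by
  suffices Ioo 0 1 ⊆ {x : ℝ | (bernsteinPolynomial ℝ (k + m) k).eval x
      * ((k + m + 2) * x - (k + 1)) ^ 2 ≤ (k + 1) * (m + 1) / (k + m + 1)} by
    rw [← closure_Ioo zero_ne_one] at hx
    exact closure_minimal this (isClosed_le (by fun_prop) continuous_const) hx
  -- the variance bound yields the inequality only after dividing by `x (1 - x)`
  rintro x ⟨hx₀, hx₁⟩
  have hvar := sq_sub_mul_eval_le (n := k + m + 2) (ν := k + 1) ⟨hx₀.le, hx₁.le⟩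
  have hb := congrArg (eval x) (add_one_mul_add_one_mul_add_two (R := ℝ) k m)
  simp only [eval_mul, eval_add, eval_natCast, eval_one, eval_X, eval_sub, eval_ofNat] at hb
  push_cast at hvar
  have hpos : 0 < (k + m + 2) * (x * (1 - x)) := by
    have : 0 < 1 - x := by linarith
    positivity
  rw [mem_ofPred_eq, le_div_iff₀ (by positivity)]
  refine le_of_mul_le_mul_right ?_ hpos
  calc _ = ((k + 1) * (m + 1) : ℝ) * (((k + m + 2) * x - (k + 1)) ^ 2
        * (bernsteinPolynomial ℝ (k + m + 2) (k + 1)).eval x) := by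
        linear_combination (((k + m + 2) * x - (k + 1)) ^ 2) * hb.symm
    _ ≤ ((k + 1) * (m + 1) : ℝ) * ((k + m + 2) * x * (1 - x)) := by gcongr
    _ = _ := by ring

theorem abs_mul_eval_mul_le_sqrt (k m : ℕ) (hx : x ∈ Icc 0 1) :
    |(k + m + 1) / ((k + 1) * (m + 1)) * (bernsteinPolynomial ℝ (k + m) k).eval x
        * ((k + m + 2) * x - (k + 1))| ≤ √((k + m + 1) / ((k + 1) * (m + 1))) := by
  set c : ℝ := (k + m + 1) / ((k + 1) * (m + 1))
  set P := (bernsteinPolynomial ℝ (k + m) k).eval x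
  set D := (k + m + 2) * x - (k + 1)
  have hPD : P * D ^ 2 ≤ c⁻¹ := by simpa [c, inv_div] using eval_mul_sq_le k m hx
  have hP₀ : 0 ≤ P := eval_nonneg hx
  have hP₁ : P ≤ 1 := eval_le_one hx
  have hc : 0 < c := by positivity
  apply Real.abs_le_sqrt
  calc (c * P * D) ^ 2 = c ^ 2 * P * (P * D ^ 2) := by ring
    _ ≤ c ^ 2 * 1 * c⁻¹ := by gcongr
    _ = c := by field_simp

end bernsteinPolynomial

theorem stmt14_general (ℓ : ℕ) (j : ℕ) (hj1 : 1 ≤ j) (hj2 : j ≤ ℓ - 1)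
    (v : ℝ) (hv : v ∈ Set.Icc (0 : ℝ) 1) :
    |1 / ((ℓ : ℝ) - (j : ℝ)) * (Nat.choose (ℓ - 1) j : ℝ)
        * (1 - v) ^ (j - 1) * v ^ (ℓ - j - 1) * ((ℓ : ℝ) * (1 - v) - (j : ℝ))|
      ≤ Real.sqrt (((ℓ : ℝ) - 1) / ((j : ℝ) * ((ℓ : ℝ) - (j : ℝ)))) := by
  obtain ⟨k, rfl⟩ : ∃ k, j = k + 1 := ⟨j - 1, by omega⟩
  obtain ⟨m, rfl⟩ : ∃ m, ℓ = k + m + 2 := ⟨ℓ - k - 2, by omega⟩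
  have hchoose : ((k : ℝ) + 1) * (k + m + 1).choose (k + 1) = (k + m + 1) * (k + m).choose k := by
    exact_mod_cast (mul_comm _ _).trans (Nat.add_one_mul_choose_eq (k + m) k).symm
  have key := bernsteinPolynomial.abs_mul_eval_mul_le_sqrt k m
    (x := 1 - v) ⟨by linarith [hv.2], by linarith [hv.1]⟩
  simp only [bernsteinPolynomial, eval_mul, eval_pow, eval_sub, eval_natCast, eval_one, eval_X,
    sub_sub_cancel, Nat.add_sub_cancel_left] at key
  rw [show k + m + 2 - 1 = k + m + 1 by omega, show k + 1 - 1 = k by omega,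
    show k + m + 2 - (k + 1) - 1 = m by omega]
  push_cast
  rw [show (k + m + 2 : ℝ) - (k + 1) = m + 1 by ring]
  convert key using 3
  · field_simp
    linear_combination (1 - v) ^ k * v ^ m * hchoose
  · ring

/-- With `h_j(v) = (1/(ℓ−j)) C(ℓ−1,j) (1−v)^{j−1} v^{ℓ−j−1}(ℓ(1−v) − j)`, we have
`|h_j(v)| ≤ √((ℓ−1)/(j(ℓ−j)))` for all `v ∈ [0,1]`. -/
theorem stmt14 (ℓ τ : ℕ) (hℓ : 2 ≤ ℓ) (hτ : 2 ≤ τ) (j : ℕ) (hj1 : 1 ≤ j) (hj2 : j ≤ ℓ - 1)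
    (v : ℝ) (hv : v ∈ Set.Icc (0 : ℝ) 1) :
    |1 / ((ℓ : ℝ) - (j : ℝ)) * (Nat.choose (ℓ - 1) j : ℝ)
        * (1 - v) ^ (j - 1) * v ^ (ℓ - j - 1) * ((ℓ : ℝ) * (1 - v) - (j : ℝ))|
      ≤ Real.sqrt (((ℓ : ℝ) - 1) / ((j : ℝ) * ((ℓ : ℝ) - (j : ℝ)))) :=
  stmt14_general ℓ j hj1 hj2 v hv
end

section
/- Let ℓ ≥ 2 and τ_0 ≥ 2ℓ. Define a_0(s) = Π_{w=s+1}^{τ−1}(1 − ℓ/(2w)) and f_0(s) = (s/(τ−1))^{ℓ/2} for τ_0 ≤ s ≤ τ−1. Then f_0(s) ≥ a_0(s), and for s ≥ 2ℓ, f_0(s)/a_0(s) ≤ exp(ℓ²(τ−1−s)/(4s(τ−1))). Consequently 0 ≤ f_0(s) − a_0(s) ≤ ℓ/(2(τ−1)) for all τ_0 ≤ s ≤ τ−1 (assuming s ≥ ℓ; for s ≤ ℓ one has f_0(s) − a_0(s) ≤ f_0(s) ≤ s/(τ−1) ≤ ℓ/(τ−1)). -/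
/-!
Since `∏_{w=s+1}^{T} (1 - 1/w) = s/T`, the continuous analogue is itself a product
`(s/T)^{ℓ/2} = ∏_w (1 - 1/w)^{ℓ/2}`, and both bounds are factorwise. Bernoulli's inequality gives
`1 - ℓ/(2w) ≤ (1 - 1/w)^{ℓ/2}`. Conversely, with `x = ℓ/(2w) ≤ 1/4`,
`(1 - 1/w)^{ℓ/2} ≤ e^{-x} = e^{x²} e^{-x-x²} ≤ e^{x²} (1 - x)`, and `∑_w x²` telescopes to at most
`X = ℓ²(T-s)/(4sT)`. Finally `f - a ≤ f (1 - e^{-X}) ≤ f X`, and with `u = s/T` we have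
`f X = u^{ℓ/2-1} (1 - u) ℓ²/(4T)`, where `u^q (1 - u) ≤ 1/(q+1)` on `[0, 1]`.
-/

open Finset Real

lemma prod_Icc_one_sub_inv {s n : ℕ} (hs : 0 < s) (hsn : s ≤ n) :
    ∏ w ∈ Icc (s + 1) n, (1 - 1 / (w : ℝ)) = s / n := by
  induction n, hsn using Nat.le_induction with
  | base => rw [Icc_eq_empty (by omega), prod_empty, div_self (by positivity)]
  | succ n hsn ih =>
    have hn : (0 : ℝ) < n := by exact_mod_cast hs.trans_le hsn
    rw [prod_Icc_succ_top (by omega), ih]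
    push_cast
    field_simp
    ring

lemma sum_Icc_inv_sq_le {s n : ℕ} (hs : 0 < s) (hsn : s ≤ n) :
    ∑ w ∈ Icc (s + 1) n, 1 / (w : ℝ) ^ 2 ≤ 1 / (s : ℝ) - 1 / n := by
  induction n, hsn using Nat.le_induction with
  | base => simp
  | succ n hsn ih =>
    have hn : (0 : ℝ) < n := by exact_mod_cast hs.trans_le hsn
    have hstep : 1 / ((n : ℝ) + 1) ^ 2 ≤ 1 / n - 1 / (n + 1) := by
      rw [div_sub_div _ _ hn.ne' (by positivity), div_le_div_iff₀ (by positivity) (by positivity)]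
      nlinarith
    rw [sum_Icc_succ_top (by omega)]
    push_cast
    linarith

lemma exp_neg_sub_sq_le_one_sub {x : ℝ} (hx0 : 0 ≤ x) (hx : x ≤ 1 / 2) :
    exp (-x - x ^ 2) ≤ 1 - x := by
  have hq := quadratic_le_exp_of_nonneg (add_nonneg hx0 (sq_nonneg x))
  have hcubic : 0 ≤ 1 - x - x ^ 2 - x ^ 3 := by nlinarith
  rw [show -x - x ^ 2 = -(x + x ^ 2) by ring, exp_neg, inv_le_iff_one_le_mul₀ (exp_pos _)]
  -- `(1 - x)(1 + t + t²/2) - 1 = x²(1 - x - x² - x³)/2` for `t = x + x²`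
  calc 1 ≤ (1 - x) * (1 + (x + x ^ 2) + (x + x ^ 2) ^ 2 / 2) := by
        nlinarith [mul_nonneg (sq_nonneg x) hcubic]
    _ ≤ (1 - x) * exp (x + x ^ 2) := by gcongr; linarith

lemma one_sub_div_le_rpow_one_sub_inv {ℓ w : ℝ} (hℓ : 2 ≤ ℓ) (hw : 1 ≤ w) :
    1 - ℓ / (2 * w) ≤ (1 - 1 / w) ^ (ℓ / 2) := by
  have hinv : 1 / w ≤ 1 := by rw [div_le_one (by linarith)]; exact hw
  have h := one_add_mul_self_le_rpow_one_add (s := -(1 / w)) (by linarith) (p := ℓ / 2)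
    (by linarith)
  rw [← sub_eq_add_neg] at h
  convert h using 1
  field_simp
  ring

lemma rpow_one_sub_inv_le_exp_mul {ℓ w : ℝ} (hℓ : 0 ≤ ℓ) (hw : 1 ≤ w) (hℓw : 2 * ℓ ≤ w) :
    (1 - 1 / w) ^ (ℓ / 2) ≤ exp (ℓ ^ 2 / (4 * w ^ 2)) * (1 - ℓ / (2 * w)) := by
  have hx0 : 0 ≤ ℓ / (2 * w) := by positivity
  have hx : ℓ / (2 * w) ≤ 1 / 2 := by
    rw [div_le_div_iff₀ (by linarith) (by norm_num)]; nlinarith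
  have hinv : 1 / w ≤ 1 := by rw [div_le_one (by linarith)]; exact hw
  calc (1 - 1 / w) ^ (ℓ / 2) ≤ exp (-(1 / w)) ^ (ℓ / 2) :=
        rpow_le_rpow (by linarith) (one_sub_le_exp_neg _) (by positivity)
    _ = exp ((ℓ / (2 * w)) ^ 2) * exp (-(ℓ / (2 * w)) - (ℓ / (2 * w)) ^ 2) := by
        rw [← exp_mul, ← exp_add]; ring_nf
    _ ≤ exp ((ℓ / (2 * w)) ^ 2) * (1 - ℓ / (2 * w)) := by
        gcongr; exact exp_neg_sub_sq_le_one_sub hx0 hx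
    _ = exp (ℓ ^ 2 / (4 * w ^ 2)) * (1 - ℓ / (2 * w)) := by ring_nf

section Products

variable {ℓ : ℝ} {s T : ℕ}

lemma succ_le_of_mem_Icc {w : ℕ} (hw : w ∈ Icc (s + 1) T) : (s : ℝ) + 1 ≤ w := by
  exact_mod_cast (mem_Icc.1 hw).1

lemma prod_one_sub_div_le_rpow (hℓ : 2 ≤ ℓ) (hℓs : ℓ ≤ 2 * (s + 1)) (hs : 0 < s) (hsT : s ≤ T) :
    ∏ w ∈ Icc (s + 1) T, (1 - ℓ / (2 * (w : ℝ))) ≤ ((s : ℝ) / T) ^ (ℓ / 2) := by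
  rw [← prod_Icc_one_sub_inv hs hsT, ← finsetProd_rpow]
  · refine prod_le_prod (fun w hw => ?_) fun w hw =>
      one_sub_div_le_rpow_one_sub_inv hℓ (by linarith [succ_le_of_mem_Icc hw])
    have := succ_le_of_mem_Icc hw
    exact sub_nonneg.2 (div_le_one_of_le₀ (by linarith) (by linarith))
  · intro w hw
    have := succ_le_of_mem_Icc hw
    exact sub_nonneg.2 (div_le_one_of_le₀ (by linarith) (by linarith))

lemma rpow_le_exp_mul_prod (hℓ : 0 ≤ ℓ) (hℓs : 2 * ℓ ≤ s) (hs : 0 < s) (hsT : s ≤ T) :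
    ((s : ℝ) / T) ^ (ℓ / 2) ≤
      exp (ℓ ^ 2 * (T - s) / (4 * s * T)) * ∏ w ∈ Icc (s + 1) T, (1 - ℓ / (2 * (w : ℝ))) := by
  have hs' : (0 : ℝ) < s := by exact_mod_cast hs
  have hT : (0 : ℝ) < T := by exact_mod_cast hs.trans_le hsT
  have hsum : ∑ w ∈ Icc (s + 1) T, ℓ ^ 2 / (4 * (w : ℝ) ^ 2) ≤ ℓ ^ 2 * (T - s) / (4 * s * T) :=
    calc ∑ w ∈ Icc (s + 1) T, ℓ ^ 2 / (4 * (w : ℝ) ^ 2)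
        = ℓ ^ 2 / 4 * ∑ w ∈ Icc (s + 1) T, 1 / (w : ℝ) ^ 2 := by
          rw [mul_sum]; exact sum_congr rfl fun w _ => by ring
      _ ≤ ℓ ^ 2 / 4 * (1 / (s : ℝ) - 1 / T) := by gcongr; exact sum_Icc_inv_sq_le hs hsT
      _ = ℓ ^ 2 * (T - s) / (4 * s * T) := by field_simp
  have hinv_nonneg : ∀ w ∈ Icc (s + 1) T, 0 ≤ 1 - 1 / (w : ℝ) := fun w hw => by
    have := succ_le_of_mem_Icc hw
    exact sub_nonneg.2 (div_le_one_of_le₀ (by linarith) (by linarith))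
  have hprod_nonneg : 0 ≤ ∏ w ∈ Icc (s + 1) T, (1 - ℓ / (2 * (w : ℝ))) := by
    refine prod_nonneg fun w hw => ?_
    have := succ_le_of_mem_Icc hw
    exact sub_nonneg.2 (div_le_one_of_le₀ (by linarith) (by linarith))
  calc ((s : ℝ) / T) ^ (ℓ / 2) = ∏ w ∈ Icc (s + 1) T, (1 - 1 / (w : ℝ)) ^ (ℓ / 2) := by
        rw [finsetProd_rpow _ _ hinv_nonneg, prod_Icc_one_sub_inv hs hsT]
    _ ≤ ∏ w ∈ Icc (s + 1) T, (exp (ℓ ^ 2 / (4 * (w : ℝ) ^ 2)) * (1 - ℓ / (2 * (w : ℝ)))) :=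
        prod_le_prod (fun w hw => rpow_nonneg (hinv_nonneg w hw) _) fun w hw =>
          rpow_one_sub_inv_le_exp_mul hℓ (by linarith [succ_le_of_mem_Icc hw])
            (by linarith [succ_le_of_mem_Icc hw])
    _ = exp (∑ w ∈ Icc (s + 1) T, ℓ ^ 2 / (4 * (w : ℝ) ^ 2)) *
          ∏ w ∈ Icc (s + 1) T, (1 - ℓ / (2 * (w : ℝ))) := by rw [prod_mul_distrib, exp_sum]
    _ ≤ exp (ℓ ^ 2 * (T - s) / (4 * s * T)) * ∏ w ∈ Icc (s + 1) T, (1 - ℓ / (2 * (w : ℝ))) := by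
        gcongr

end Products

lemma rpow_mul_one_sub_le {u q : ℝ} (hu0 : 0 < u) (hu1 : u ≤ 1) (hq : 0 ≤ q) :
    u ^ q * (1 - u) ≤ 1 / (q + 1) := by
  have hupper : u ^ q ≤ exp (q * (u - 1)) := by
    rw [rpow_def_of_pos hu0, mul_comm]
    gcongr
    exact log_le_sub_one_of_pos hu0
  have hlower : 1 + q * (1 - u) ≤ exp (q * (1 - u)) := by linarith [add_one_le_exp (q * (1 - u))]
  have hone : u ^ q * (1 + q * (1 - u)) ≤ 1 :=
    calc u ^ q * (1 + q * (1 - u)) ≤ exp (q * (u - 1)) * exp (q * (1 - u)) := by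
          gcongr
      _ = 1 := by rw [← exp_add]; ring_nf; exact exp_zero
  rw [le_div_iff₀ (by linarith)]
  nlinarith [rpow_nonneg hu0.le q]

lemma rpow_div_mul_le {ℓ s T : ℝ} (hℓ : 2 ≤ ℓ) (hs : 0 < s) (hsT : s ≤ T) :
    (s / T) ^ (ℓ / 2) * (ℓ ^ 2 * (T - s) / (4 * s * T)) ≤ ℓ / (2 * T) := by
  have hT : 0 < T := hs.trans_le hsT
  have hu : 0 < s / T := by positivity
  have hmax := rpow_mul_one_sub_le hu (by rwa [div_le_one hT]) (q := ℓ / 2 - 1) (by linarith)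
  calc (s / T) ^ (ℓ / 2) * (ℓ ^ 2 * (T - s) / (4 * s * T))
        = (s / T) ^ (ℓ / 2 - 1) * (1 - s / T) * (ℓ ^ 2 / (4 * T)) := by
          rw [rpow_sub_one hu.ne']; field_simp
    _ ≤ 1 / (ℓ / 2 - 1 + 1) * (ℓ ^ 2 / (4 * T)) := by gcongr
    _ = ℓ / (2 * T) := by rw [sub_add_cancel]; field_simp; ring

lemma sub_le_mul_of_le_exp_mul {F P X : ℝ} (hF : 0 ≤ F) (h : F ≤ exp X * P) : F - P ≤ F * X := by
  have hP : exp (-X) * F ≤ P := by rw [exp_neg, inv_mul_le_iff₀ (exp_pos X)]; exact h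
  nlinarith [mul_le_mul_of_nonneg_left (one_sub_le_exp_neg X) hF]

theorem stmt16_general (ℓ τ₀ τ s : ℕ) (hℓ : 2 ≤ ℓ) (hτ₀ : 2 * ℓ ≤ τ₀)
    (hs1 : τ₀ ≤ s) (hs2 : s ≤ τ - 1) :
    (∏ w ∈ Finset.Icc (s + 1) (τ - 1), (1 - (ℓ : ℝ) / (2 * (w : ℝ))))
        ≤ ((s : ℝ) / ((τ : ℝ) - 1)) ^ ((ℓ : ℝ) / 2) ∧
    ((s : ℝ) / ((τ : ℝ) - 1)) ^ ((ℓ : ℝ) / 2)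
        / (∏ w ∈ Finset.Icc (s + 1) (τ - 1), (1 - (ℓ : ℝ) / (2 * (w : ℝ))))
      ≤ Real.exp ((ℓ : ℝ) ^ 2 * ((τ : ℝ) - 1 - (s : ℝ)) / (4 * (s : ℝ) * ((τ : ℝ) - 1))) ∧
    0 ≤ ((s : ℝ) / ((τ : ℝ) - 1)) ^ ((ℓ : ℝ) / 2)
        - ∏ w ∈ Finset.Icc (s + 1) (τ - 1), (1 - (ℓ : ℝ) / (2 * (w : ℝ))) ∧
    ((s : ℝ) / ((τ : ℝ) - 1)) ^ ((ℓ : ℝ) / 2)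
        - (∏ w ∈ Finset.Icc (s + 1) (τ - 1), (1 - (ℓ : ℝ) / (2 * (w : ℝ))))
      ≤ (ℓ : ℝ) / (2 * ((τ : ℝ) - 1)) := by
  have hsℓ : 2 * ℓ ≤ s := hτ₀.trans hs1
  have hs0 : 0 < s := by omega
  rw [show (τ : ℝ) - 1 = ((τ - 1 : ℕ) : ℝ) by rw [Nat.cast_sub (by omega), Nat.cast_one]]
  have hℓ' : (2 : ℝ) ≤ ℓ := by exact_mod_cast hℓ
  have hsℓ' : 2 * (ℓ : ℝ) ≤ s := by exact_mod_cast hsℓ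
  have hsT : (s : ℝ) ≤ (τ - 1 : ℕ) := by exact_mod_cast hs2
  have hs0' : (0 : ℝ) < s := by exact_mod_cast hs0
  have hF : 0 < ((s : ℝ) / (τ - 1 : ℕ)) ^ ((ℓ : ℝ) / 2) :=
    rpow_pos_of_pos (div_pos hs0' (hs0'.trans_le hsT)) _
  have hle := prod_one_sub_div_le_rpow hℓ' (by linarith) hs0 hs2
  have hratio := rpow_le_exp_mul_prod (by linarith) hsℓ' hs0 hs2
  have hP := (mul_pos_iff_of_pos_left (exp_pos _)).1 (hF.trans_le hratio)
  refine ⟨hle, (div_le_iff₀ hP).2 (mul_comm (exp _) _ ▸ hratio), sub_nonneg.2 hle, ?_⟩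
  exact (sub_le_mul_of_le_exp_mul hF.le hratio).trans (rpow_div_mul_le hℓ' hs0' hsT)

/-- Comparison of the discrete survival probability
`a_0(s) = ∏_{w=s+1}^{τ−1} (1 − ℓ/(2w))` with its continuous analogue
`f_0(s) = (s/(τ−1))^{ℓ/2}`: `a_0(s) ≤ f_0(s)`,
`f_0(s)/a_0(s) ≤ exp(ℓ²(τ−1−s)/(4s(τ−1)))`, and `0 ≤ f_0(s) − a_0(s) ≤ ℓ/(2(τ−1))`. -/
theorem stmt16 (ℓ τ₀ τ s : ℕ) (hℓ : 2 ≤ ℓ) (hτ₀ : 2 * ℓ ≤ τ₀) (hτ : 2 ≤ τ)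
    (hs1 : τ₀ ≤ s) (hs2 : s ≤ τ - 1) :
    (∏ w ∈ Finset.Icc (s + 1) (τ - 1), (1 - (ℓ : ℝ) / (2 * (w : ℝ))))
        ≤ ((s : ℝ) / ((τ : ℝ) - 1)) ^ ((ℓ : ℝ) / 2) ∧
    ((s : ℝ) / ((τ : ℝ) - 1)) ^ ((ℓ : ℝ) / 2)
        / (∏ w ∈ Finset.Icc (s + 1) (τ - 1), (1 - (ℓ : ℝ) / (2 * (w : ℝ))))
      ≤ Real.exp ((ℓ : ℝ) ^ 2 * ((τ : ℝ) - 1 - (s : ℝ)) / (4 * (s : ℝ) * ((τ : ℝ) - 1))) ∧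
    0 ≤ ((s : ℝ) / ((τ : ℝ) - 1)) ^ ((ℓ : ℝ) / 2)
        - ∏ w ∈ Finset.Icc (s + 1) (τ - 1), (1 - (ℓ : ℝ) / (2 * (w : ℝ))) ∧
    ((s : ℝ) / ((τ : ℝ) - 1)) ^ ((ℓ : ℝ) / 2)
        - (∏ w ∈ Finset.Icc (s + 1) (τ - 1), (1 - (ℓ : ℝ) / (2 * (w : ℝ))))
      ≤ (ℓ : ℝ) / (2 * ((τ : ℝ) - 1)) :=
  stmt16_general ℓ τ₀ τ s hℓ hτ₀ hs1 hs2
end
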